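/- arXiv:2403.05120 — 2 statements merged into one kernel-verified Lean document; each statement's English description precedes it below -/
import Mathlib

section
/- If u and v are false twins in a graph G (i.e., N(u) = N(v)) and S is a general position set of G with S ∩ {u,v} = {u}, then (S \ {u}) ∪ {v} is also a general position set of G. -/
open SimpleGraph

variable {V : Type*}

/-- A walk is a shortest path if it is a path and its length equals the distance
between its endpoints. -/
def SimpleGraph.IsShortestPath (G : SimpleGraph V) {u v : V} (p : G.Walk u v) : Prop :=
  p.IsPath ∧ p.length = G.dist u v

/-- `S` is a general position set: no three vertices of `S` lie on a common shortest path. -/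
def SimpleGraph.IsGPSet (G : SimpleGraph V) (S : Set V) : Prop :=
  ∀ ⦃u v : V⦄ (p : G.Walk u v), G.IsShortestPath p →
    ∀ x ∈ S, ∀ y ∈ S, ∀ z ∈ S, x ≠ y → x ≠ z → y ≠ z →
      ¬ (x ∈ p.support ∧ y ∈ p.support ∧ z ∈ p.support)

/-- `u` and `v` are `S`-visible: some shortest `u,v`-path has no internal vertex in `S`. -/
def SimpleGraph.SVisible (G : SimpleGraph V) (S : Set V) (u v : V) : Prop :=
  ∃ p : G.Walk u v, G.IsShortestPath p ∧ ∀ w ∈ p.support, w ≠ u → w ≠ v → w ∉ S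

/-- `S` is a mutual-visibility set. -/
def SimpleGraph.IsMVSet (G : SimpleGraph V) (S : Set V) : Prop :=
  ∀ u ∈ S, ∀ v ∈ S, u ≠ v → G.SVisible S u v

/-- `S` is a total mutual-visibility set. -/
def SimpleGraph.IsTotalMVSet (G : SimpleGraph V) (S : Set V) : Prop :=
  ∀ u v : V, u ≠ v → G.SVisible S u v

/-- `S` is an outer mutual-visibility set. -/
def SimpleGraph.IsOuterMVSet (G : SimpleGraph V) (S : Set V) : Prop :=
  G.IsMVSet S ∧ ∀ u ∈ S, ∀ v ∉ S, u ≠ v → G.SVisible S u v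

/-- The mutual-visibility number `μ(G)`. -/
noncomputable def SimpleGraph.mutualVisibilityNumber (G : SimpleGraph V) [Fintype V] : ℕ :=
  sSup {k | ∃ S : Finset V, G.IsMVSet ↑S ∧ S.card = k}

/-- The total mutual-visibility number `μ_t(G)`. -/
noncomputable def SimpleGraph.totalMutualVisibilityNumber (G : SimpleGraph V) [Fintype V] : ℕ :=
  sSup {k | ∃ S : Finset V, G.IsTotalMVSet ↑S ∧ S.card = k}

/-- The outer mutual-visibility number `μ_o(G)`. -/
noncomputable def SimpleGraph.outerMutualVisibilityNumber (G : SimpleGraph V) [Fintype V] : ℕ :=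
  sSup {k | ∃ S : Finset V, G.IsOuterMVSet ↑S ∧ S.card = k}

/-- The general position number `gp(G)`. -/
noncomputable def SimpleGraph.gpNumber (G : SimpleGraph V) [Fintype V] : ℕ :=
  sSup {k | ∃ S : Finset V, G.IsGPSet ↑S ∧ S.card = k}

/-- The double graph `D(G)`: two copies of each vertex, `(u, b)` adjacent to `(v, c)`
iff `u` adjacent to `v` in `G`. -/
def SimpleGraph.doubleGraph (G : SimpleGraph V) : SimpleGraph (V × Bool) where
  Adj x y := G.Adj x.1 y.1
  symm := ⟨fun _ _ h => G.adj_symm h⟩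
  loopless := ⟨fun x h => G.irrefl h⟩

/-- The Mycielskian `M(G)`: `some (u, false)` are the original vertices, `some (u, true)`
their copies, and `none` is the apex vertex `v*`. -/
def SimpleGraph.mycielskian (G : SimpleGraph V) : SimpleGraph (Option (V × Bool)) where
  Adj x y := match x, y with
    | some (u, false), some (v, false) => G.Adj u v
    | some (u, false), some (v, true) => G.Adj u v
    | some (u, true), some (v, false) => G.Adj u v
    | some (_, true), none => True
    | none, some (_, true) => True
    | _, _ => False
  symm := ⟨by
    rintro (_ | ⟨u, (_|_)⟩) (_ | ⟨v, (_|_)⟩) h <;>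
      first
        | exact h
        | exact G.adj_symm h⟩
  loopless := ⟨by
    rintro (_ | ⟨u, (_|_)⟩) h
    · exact h
    · exact G.irrefl h
    · exact h⟩

/-!
Swapping two false twins is an automorphism of `G`. Isomorphisms preserve distances, hence
shortest paths, so they pull general position sets back to general position sets; and the
preimage of `S` under the swap is `(S \ {u}) ∪ {v}`.
-/

namespace SimpleGraph

variable {W : Type*} {G : SimpleGraph V} {G' : SimpleGraph W}

theorem Hom.edist_map_le (f : G →g G') (a b : V) : G'.edist (f a) (f b) ≤ G.edist a b := by
  by_cases hab : G.Reachable a b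
  · obtain ⟨p, hp⟩ := hab.exists_walk_length_eq_edist
    calc G'.edist (f a) (f b) ≤ (p.map f).length := edist_le _
      _ = G.edist a b := by rw [Walk.length_map, hp]
  · rw [edist_eq_top_of_not_reachable hab]
    exact le_top

theorem Iso.edist_map (e : G ≃g G') (a b : V) : G'.edist (e a) (e b) = G.edist a b :=
  le_antisymm (e.toHom.edist_map_le a b) <| by
    simpa using e.symm.toHom.edist_map_le (e a) (e b)

theorem Iso.dist_map (e : G ≃g G') (a b : V) : G'.dist (e a) (e b) = G.dist a b := by
  simp only [dist, e.edist_map]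

theorem IsShortestPath.map_iso (e : G ≃g G') {a b : V} {p : G.Walk a b}
    (hp : G.IsShortestPath p) : G'.IsShortestPath (p.map e.toHom) :=
  ⟨hp.1.map e.injective, by rw [Walk.length_map, hp.2, ← e.dist_map]; rfl⟩

theorem IsGPSet.preimage_iso {S : Set W} (e : G ≃g G') (hS : G'.IsGPSet S) :
    G.IsGPSet (e ⁻¹' S) := by
  intro a b p hp x hx y hy z hz hxy hxz hyz ⟨hxp, hyp, hzp⟩
  have hmem : ∀ w ∈ p.support, e w ∈ (p.map e.toHom).support := fun w hw => by
    rw [Walk.support_map]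
    exact List.mem_map_of_mem hw
  exact hS _ (hp.map_iso e) _ hx _ hy _ hz (e.injective.ne hxy) (e.injective.ne hxz)
    (e.injective.ne hyz) ⟨hmem x hxp, hmem y hyp, hmem z hzp⟩

section FalseTwins

variable [DecidableEq V] {u v : V}

theorem adj_swap_iff_of_neighborSet_eq (htwin : G.neighborSet u = G.neighborSet v) (a b : V) :
    G.Adj (Equiv.swap u v a) (Equiv.swap u v b) ↔ G.Adj a b := by
  have hleft : ∀ w, G.Adj u w ↔ G.Adj v w := fun w => Set.ext_iff.mp htwin w
  have hright : ∀ w, G.Adj w u ↔ G.Adj w v := fun w => by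
    rw [adj_comm, hleft, adj_comm]
  simp only [Equiv.swap_apply_def]
  split_ifs <;> subst_vars <;> simp [hleft, hright]

def falseTwinSwap (htwin : G.neighborSet u = G.neighborSet v) : G ≃g G where
  toEquiv := Equiv.swap u v
  map_rel_iff' := adj_swap_iff_of_neighborSet_eq htwin _ _

end FalseTwins

end SimpleGraph

theorem Equiv.swap_preimage_eq_of_inter_pair_eq [DecidableEq V] {S : Set V} {u v : V}
    (h : S ∩ {u, v} = {u}) : Equiv.swap u v ⁻¹' S = (S \ {u}) ∪ {v} := by
  have hu : u ∈ S := (h.symm.subset rfl).1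
  have hv : v ∈ S → v = u := fun hv => h.subset ⟨hv, Or.inr rfl⟩
  ext x
  simp only [Set.mem_preimage, Equiv.swap_apply_def, Set.mem_union, Set.mem_sdiff,
    Set.mem_singleton_iff]
  grind

theorem false_twins_gp_general (G : SimpleGraph V) (u v : V)
    (htwin : G.neighborSet u = G.neighborSet v) (S : Set V)
    (hS : G.IsGPSet S) (hSuv : S ∩ {u, v} = {u}) :
    G.IsGPSet ((S \ {u}) ∪ {v}) := by
  classical
  rw [← Equiv.swap_preimage_eq_of_inter_pair_eq hSuv]
  exact hS.preimage_iso (falseTwinSwap htwin)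

theorem false_twins_gp (G : SimpleGraph V) (hconn : G.Connected) (u v : V)
    (htwin : G.neighborSet u = G.neighborSet v) (S : Set V)
    (hS : G.IsGPSet S) (hSuv : S ∩ {u, v} = {u}) :
    G.IsGPSet ((S \ {u}) ∪ {v}) :=
  false_twins_gp_general G u v htwin S hS hSuv
end

section
/- For every n ≥ 2, gp(D(K_n)) = n. -/
open SimpleGraph

variable {V : Type*}

/-!
In `D(K_n)` two vertices are adjacent iff they lie over distinct vertices of `K_n`. One copy of
each vertex of `K_n` is a clique, and a clique is in general position in any graph: three vertices
of a geodesic cannot be pairwise at distance one. Conversely, if a general position set contains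
both copies of a vertex, it contains nothing else, since every other vertex is a common neighbour
of these two twins at distance two; otherwise it projects injectively into `K_n`.
-/

namespace SimpleGraph

variable {G : SimpleGraph V}

lemma Walk.dist_getVert_getVert_of_length_eq_dist {u v : V} {p : G.Walk u v}
    (hp : p.length = G.dist u v) {i j : ℕ} (hij : i ≤ j) (hj : j ≤ p.length) :
    G.dist (p.getVert i) (p.getVert j) = j - i := by
  have hsub : ((p.drop i).take (j - i)).IsSubwalk p :=
    (Walk.isSubwalk_take _ _).trans (Walk.isSubwalk_drop _ _)
  have := length_eq_dist_of_subwalk hp hsub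
  rw [Walk.take_length, Walk.drop_length, Walk.drop_getVert, Nat.add_sub_cancel' hij] at this
  omega

lemma IsClique.isGPSet {S : Set V} (hS : G.IsClique S) : G.IsGPSet S := by
  rintro u v p ⟨-, hp⟩ x hx y hy z hz hxy hxz hyz ⟨hxp, hyp, hzp⟩
  have hgap : ∀ a ∈ S, ∀ b ∈ S, a ≠ b → ∀ i j, i ≤ p.length → j ≤ p.length →
      p.getVert i = a → p.getVert j = b → (j - i) + (i - j) = 1 := by
    rintro a ha b hb hab i j hi hj rfl rfl
    have hadj := G.dist_eq_one_iff_adj.mpr (hS ha hb hab)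
    rcases le_total i j with hij | hji
    · rw [p.dist_getVert_getVert_of_length_eq_dist hp hij hj] at hadj; omega
    · rw [dist_comm, p.dist_getVert_getVert_of_length_eq_dist hp hji hi] at hadj; omega
  obtain ⟨i, rfl, hi⟩ := Walk.mem_support_iff_exists_getVert.mp hxp
  obtain ⟨j, rfl, hj⟩ := Walk.mem_support_iff_exists_getVert.mp hyp
  obtain ⟨k, rfl, hk⟩ := Walk.mem_support_iff_exists_getVert.mp hzp
  have := hgap _ hx _ hy hxy i j hi hj rfl rfl
  have := hgap _ hx _ hz hxz i k hi hk rfl rfl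
  have := hgap _ hy _ hz hyz j k hj hk rfl rfl
  omega

lemma IsGPSet.notMem_of_adj_of_adj {S : Set V} (hS : G.IsGPSet S) {a b z : V} (ha : a ∈ S)
    (hb : b ∈ S) (hab : a ≠ b) (hnadj : ¬G.Adj a b) (haz : G.Adj a z) (hzb : G.Adj z b) :
    z ∉ S := by
  intro hz
  let p : G.Walk a b := .cons haz (.cons hzb .nil)
  have hdist : G.dist a b = 2 := by
    have := p.reachable.one_lt_dist_of_ne_of_not_adj hab hnadj
    have : G.dist a b ≤ 2 := dist_le p
    omega
  have hpath : p.IsPath := p.isPath_of_length_eq_dist hdist.symm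
  exact hS p ⟨hpath, hdist.symm⟩ a ha z hz b hb haz.ne hab hzb.ne
    ⟨by simp [p], by simp [p], by simp [p]⟩

lemma le_gpNumber [Fintype V] {S : Finset V} (hS : G.IsGPSet S) : S.card ≤ G.gpNumber :=
  le_csSup ⟨Fintype.card V, by rintro _ ⟨T, -, rfl⟩; exact T.card_le_univ⟩ ⟨S, hS, rfl⟩

lemma gpNumber_le [Fintype V] {k : ℕ} (h : ∀ S : Finset V, G.IsGPSet S → S.card ≤ k) :
    G.gpNumber ≤ k :=
  csSup_le ⟨0, ∅, by simp [IsGPSet], rfl⟩ (by rintro _ ⟨S, hS, rfl⟩; exact h S hS)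

lemma doubleGraph_top_adj (x y : V × Bool) :
    (⊤ : SimpleGraph V).doubleGraph.Adj x y ↔ x.1 ≠ y.1 :=
  top_adj x.1 y.1

lemma isClique_doubleGraph_top_range_true :
    (⊤ : SimpleGraph V).doubleGraph.IsClique (Set.range fun v => (v, true)) := by
  rintro _ ⟨u, rfl⟩ _ ⟨v, rfl⟩ huv
  exact (doubleGraph_top_adj _ _).mpr fun h => huv (Prod.ext h rfl)

lemma card_le_of_isGPSet_doubleGraph_top [Fintype V] (hV : 2 ≤ Fintype.card V)
    {S : Finset (V × Bool)} (hS : (⊤ : SimpleGraph V).doubleGraph.IsGPSet S) :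
    S.card ≤ Fintype.card V := by
  classical
  by_cases hinj : Set.InjOn Prod.fst (S : Set (V × Bool))
  · simpa using Finset.card_le_card_of_injOn Prod.fst (fun x _ => Finset.mem_univ x.1) hinj
  simp only [Set.InjOn, not_forall] at hinj
  obtain ⟨a, ha, b, hb, hfst, hab⟩ := hinj
  have hsub : S ⊆ {a, b} := by
    intro z hz
    by_contra hzab
    simp only [Finset.mem_insert, Finset.mem_singleton, not_or] at hzab
    have hza : z.1 ≠ a.1 := by
      intro h
      have hsnd : a.2 ≠ b.2 := fun h' => hab (Prod.ext hfst h')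
      cases hz2 : z.2 <;> cases ha2 : a.2 <;> cases hb2 : b.2 <;>
        simp_all [Prod.ext_iff]
    exact hS.notMem_of_adj_of_adj ha hb hab (fun h => (doubleGraph_top_adj _ _).mp h hfst)
      ((doubleGraph_top_adj _ _).mpr hza.symm) ((doubleGraph_top_adj _ _).mpr (hfst ▸ hza)) hz
  calc S.card ≤ ({a, b} : Finset _).card := Finset.card_le_card hsub
    _ ≤ 2 := Finset.card_le_two
    _ ≤ Fintype.card V := hV

lemma gpNumber_doubleGraph_top [Fintype V] (hV : 2 ≤ Fintype.card V) :
    (⊤ : SimpleGraph V).doubleGraph.gpNumber = Fintype.card V := by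
  refine le_antisymm (gpNumber_le fun S hS => card_le_of_isGPSet_doubleGraph_top hV hS) ?_
  have hinj : Function.Injective fun v : V => (v, true) := fun u v h => congrArg Prod.fst h
  have hGP : (⊤ : SimpleGraph V).doubleGraph.IsGPSet ↑(Finset.univ.map ⟨_, hinj⟩) := by
    simpa using isClique_doubleGraph_top_range_true.isGPSet
  simpa using le_gpNumber hGP

end SimpleGraph

theorem gp_double_complete (n : ℕ) (hn : 2 ≤ n) :
    (⊤ : SimpleGraph (Fin n)).doubleGraph.gpNumber = n := by
  simpa using gpNumber_doubleGraph_top (V := Fin n) (by simpa using hn)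
end
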